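/- Let D̄_j ∈ R^{n×(n−m)} and D_j ∈ R^{n×m} satisfy ker(D_j^T) = ran(D̄_j) for each j ∈ {0,...,δ}, and suppose the stacked matrix D^T = [D_0 ... D_δ]^T has rank n. If for each j the family of sets S_{j,k} ⊆ R^n is uniformly bounded in diameter over k ∈ N, then the (assumed nonempty) intersections ⋂_{j=0}^{δ} (ran(D̄_j) + S_{j,k}) are uniformly bounded in diameter over k ∈ N. -/
import Mathlib


open Matrix Pointwise

/-- Uniformly bounded intersection: intersections of affine "tubes"
`ran(D̄ⱼ) + S_{j,k}` are uniformly bounded in diameter over `k` provided the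
stacked matrix `Dᵀ` has full rank `n` and the `S_{j,k}` are uniformly bounded. -/
theorem stmt_7 (n m δ : ℕ)
    (Dbar : Fin (δ + 1) → Matrix (Fin n) (Fin (n - m)) ℝ)
    (D : Fin (δ + 1) → Matrix (Fin n) (Fin m) ℝ)
    (hker : ∀ j, LinearMap.ker (Matrix.toEuclideanLin (D j)ᵀ) =
        LinearMap.range (Matrix.toEuclideanLin (Dbar j)))
    (Dstacked : Matrix (Fin (δ + 1) × Fin m) (Fin n) ℝ)
    (hD : ∀ (p : Fin (δ + 1) × Fin m) (c : Fin n), Dstacked p c = (D p.1)ᵀ p.2 c)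
    (hrank : Dstacked.rank = n)
    (S : Fin (δ + 1) → ℕ → Set (EuclideanSpace ℝ (Fin n)))
    (hbd : ∀ j k, Bornology.IsBounded (S j k))
    (hunif : ∀ j, ∃ dbar : ℝ, ∀ k, Metric.diam (S j k) ≤ dbar)
    (hne : ∀ k : ℕ,
      (⋂ j, ((LinearMap.range (Matrix.toEuclideanLin (Dbar j)) :
          Submodule ℝ (EuclideanSpace ℝ (Fin n))) : Set (EuclideanSpace ℝ (Fin n)))
            + S j k |>.Nonempty)) :
    ∃ dbar : ℝ, ∀ k : ℕ,
      Metric.diam (⋂ j, ((LinearMap.range (Matrix.toEuclideanLin (Dbar j)) :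
          Submodule ℝ (EuclideanSpace ℝ (Fin n))) : Set (EuclideanSpace ℝ (Fin n)))
            + S j k) ≤ dbar := by
  classical
  choose db hdb using hunif
  have hdb0 : ∀ j, 0 ≤ db j := fun j => le_trans Metric.diam_nonneg (hdb j 0)
  -- the stacked linear map
  set L : EuclideanSpace ℝ (Fin n) →ₗ[ℝ] EuclideanSpace ℝ (Fin (δ + 1) × Fin m) :=
    Matrix.toEuclideanLin Dstacked with hLdef
  -- per-block maps, as continuous linear maps
  set T : Fin (δ + 1) → (EuclideanSpace ℝ (Fin n) →L[ℝ] EuclideanSpace ℝ (Fin m)) :=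
    fun j => LinearMap.toContinuousLinearMap (Matrix.toEuclideanLin (D j)ᵀ) with hTdef
  -- injectivity of L from the rank hypothesis
  have hkerL : LinearMap.ker L = ⊥ := by
    have h1 : Module.finrank ℝ (LinearMap.ker Dstacked.mulVecLin) = 0 := by
      have h2 := LinearMap.finrank_range_add_finrank_ker Dstacked.mulVecLin
      rw [Module.finrank_pi] at h2
      have h3 : Module.finrank ℝ ↥(LinearMap.range Dstacked.mulVecLin) = n := hrank
      simp only [Fintype.card_fin] at h2
      omega
    have hker' : LinearMap.ker Dstacked.mulVecLin = ⊥ :=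
      Submodule.finrank_eq_zero.mp h1
    rw [LinearMap.ker_eq_bot] at hker' ⊢
    intro x y hxy
    have hxy' : Dstacked.mulVecLin (WithLp.equiv 2 (Fin n → ℝ) x)
        = Dstacked.mulVecLin (WithLp.equiv 2 (Fin n → ℝ) y) := by
      simpa [hLdef, Matrix.toEuclideanLin_apply, Matrix.mulVecLin_apply] using
        congrArg (WithLp.equiv 2 (Fin (δ + 1) × Fin m → ℝ)) hxy
    exact (WithLp.equiv 2 (Fin n → ℝ)).injective (hker' hxy')
  obtain ⟨K, hK0, hK⟩ := LinearMap.exists_antilipschitzWith L hkerL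
  -- componentwise description of L
  have hcomp : ∀ v : EuclideanSpace ℝ (Fin n), ∀ j i, L v (j, i) = T j v i := by
    intro v j i
    simp only [hLdef, hTdef, Matrix.toEuclideanLin_apply,
      LinearMap.coe_toContinuousLinearMap']
    show ((WithLp.equiv 2 (Fin (δ + 1) × Fin m → ℝ)).symm
        (Dstacked *ᵥ WithLp.equiv 2 (Fin n → ℝ) v)) (j, i)
      = ((WithLp.equiv 2 (Fin m → ℝ)).symm
        ((D j)ᵀ *ᵥ WithLp.equiv 2 (Fin n → ℝ) v)) i
    simp [Matrix.mulVec, dotProduct, hD (j, i)]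
  -- norm of L v bounded by sum of block norms
  have hnormL : ∀ v : EuclideanSpace ℝ (Fin n), ‖L v‖ ≤ ∑ j, ‖T j v‖ := by
    intro v
    have h1 : ‖L v‖ = Real.sqrt (∑ j, ‖T j v‖ ^ 2) := by
      rw [EuclideanSpace.norm_eq]
      congr 1
      rw [Fintype.sum_prod_type]
      refine Finset.sum_congr rfl fun j _ => ?_
      rw [EuclideanSpace.norm_eq, Real.sq_sqrt (by positivity)]
      exact Finset.sum_congr rfl fun i _ => by rw [hcomp v j i]
    rw [h1]
    have h2 : ∑ j, ‖T j v‖ ^ 2 ≤ (∑ j, ‖T j v‖) ^ 2 :=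
      Finset.sum_sq_le_sq_sum_of_nonneg (fun j _ => norm_nonneg _)
    calc Real.sqrt (∑ j, ‖T j v‖ ^ 2) ≤ Real.sqrt ((∑ j, ‖T j v‖) ^ 2) :=
          Real.sqrt_le_sqrt h2
      _ = ∑ j, ‖T j v‖ := Real.sqrt_sq (by positivity)
  -- the uniform bound
  have hsum0 : 0 ≤ ∑ j, ‖T j‖ * db j :=
    Finset.sum_nonneg fun j _ => mul_nonneg (norm_nonneg _) (hdb0 j)
  refine ⟨(K : ℝ) * ∑ j, ‖T j‖ * db j, fun k => ?_⟩
  apply Metric.diam_le_of_forall_dist_le (mul_nonneg K.coe_nonneg hsum0)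
  intro x hx x' hx'
  -- pick decompositions
  have hdec : ∀ j, ∀ z ∈ ((LinearMap.range (Matrix.toEuclideanLin (Dbar j)) :
      Submodule ℝ (EuclideanSpace ℝ (Fin n))) : Set (EuclideanSpace ℝ (Fin n))) + S j k,
      ∃ s ∈ S j k, T j z = T j s := by
    intro j z hz
    obtain ⟨u, hu, s, hs, rfl⟩ := Set.mem_add.mp hz
    refine ⟨s, hs, ?_⟩
    have hu0 : Matrix.toEuclideanLin (D j)ᵀ u = 0 := by
      have : u ∈ LinearMap.ker (Matrix.toEuclideanLin (D j)ᵀ) := by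
        rw [hker j]; exact hu
      exact this
    show LinearMap.toContinuousLinearMap (Matrix.toEuclideanLin (D j)ᵀ) (u + s) = _
    simp only [hTdef, LinearMap.coe_toContinuousLinearMap', map_add, hu0, zero_add]
  have hblock : ∀ j, ‖T j (x - x')‖ ≤ ‖T j‖ * db j := by
    intro j
    obtain ⟨s, hs, hts⟩ := hdec j x (Set.mem_iInter.mp hx j)
    obtain ⟨s', hs', hts'⟩ := hdec j x' (Set.mem_iInter.mp hx' j)
    have : T j (x - x') = T j (s - s') := by
      rw [map_sub, map_sub, hts, hts']
    rw [this]
    calc ‖T j (s - s')‖ ≤ ‖T j‖ * ‖s - s'‖ := (T j).le_opNorm _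
      _ ≤ ‖T j‖ * db j := by
          refine mul_le_mul_of_nonneg_left ?_ (norm_nonneg _)
          calc ‖s - s'‖ = dist s s' := (dist_eq_norm s s').symm
            _ ≤ Metric.diam (S j k) := Metric.dist_le_diam_of_mem (hbd j k) hs hs'
            _ ≤ db j := hdb j k
  calc dist x x' ≤ (K : ℝ) * dist (L x) (L x') := hK.le_mul_dist x x'
    _ ≤ (K : ℝ) * ∑ j, ‖T j‖ * db j := by
        refine mul_le_mul_of_nonneg_left ?_ K.coe_nonneg
        calc dist (L x) (L x') = ‖L (x - x')‖ := by rw [dist_eq_norm, map_sub]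
          _ ≤ ∑ j, ‖T j (x - x')‖ := hnormL _
          _ ≤ ∑ j, ‖T j‖ * db j := Finset.sum_le_sum fun j _ => hblock j
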